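/- arXiv:1010.6188 — 2 statements merged into one kernel-verified Lean document; each statement's English description precedes it below -/
import Mathlib

section
/- If S : H → H is a bounded linear operator on a Hilbert space H, then S is not compact if and only if there exist λ > 0, an orthonormal sequence (w_i) in H, and a sequence (u_i) in the closed unit ball of H such that S u_i = λ w_i for every i. -/
open ContinuousLinearMap in
theorem stepX {H : Type*} [NormedAddCommGroup H]
    [InnerProductSpace ℂ H] [CompleteSpace H] (S : H →L[ℂ] H) (ε : ℝ) (hε : 0 < ε)
    (hF : ∀ F : Submodule ℂ H, FiniteDimensional ℂ F →
      ∃ x ∈ Fᗮ, ‖x‖ ≤ 1 ∧ ε < ‖S x‖) :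
    ∃ c : ℝ, 0 < c ∧ ∃ w u : ℕ → H, Orthonormal ℂ w ∧
        (∀ i, ‖u i‖ ≤ 1) ∧ ∀ i, S (u i) = (c : ℂ) • w i := by
  have hsel : ∀ s : Finset H, (∀ x ∈ s, ‖x‖ ≤ 1 ∧ ε < ‖S x‖) →
      ∃ y, (‖y‖ ≤ 1 ∧ ε < ‖S y‖) ∧ ∀ x ∈ s,
        inner ℂ x y = (0 : ℂ) ∧ inner ℂ (S x) (S y) = (0 : ℂ) := by
    intro s hs
    classical
    set T := (ContinuousLinearMap.adjoint S) with hT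
    have hfin : ((↑s : Set H) ∪ (fun x => T (S x)) '' ↑s).Finite :=
      s.finite_toSet.union (s.finite_toSet.image _)
    set F := Submodule.span ℂ ((↑s : Set H) ∪ (fun x => T (S x)) '' ↑s) with hFdef
    have : FiniteDimensional ℂ F := FiniteDimensional.span_of_finite ℂ hfin
    obtain ⟨y, hyF, hy1, hySy⟩ := hF F this
    refine ⟨y, ⟨hy1, hySy⟩, fun x hx => ⟨?_, ?_⟩⟩
    · exact (Submodule.mem_orthogonal F y).mp hyF x
        (Submodule.subset_span (Or.inl (by exact_mod_cast hx)))
    · rw [← ContinuousLinearMap.adjoint_inner_left]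
      exact (Submodule.mem_orthogonal F y).mp hyF _
        (Submodule.subset_span (Or.inr ⟨x, by exact_mod_cast hx, rfl⟩))
  obtain ⟨f, hfP, hfr⟩ := exists_seq_of_forall_finset_exists
    (fun x : H => ‖x‖ ≤ 1 ∧ ε < ‖S x‖)
    (fun x y => inner ℂ x y = (0 : ℂ) ∧ inner ℂ (S x) (S y) = (0 : ℂ)) hsel
  have hpos : ∀ i, 0 < ‖S (f i)‖ := fun i => hε.trans (hfP i).2
  have horth : ∀ i j, i ≠ j → inner ℂ (S (f i)) (S (f j)) = (0 : ℂ) := by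
    intro i j hij
    rcases lt_or_gt_of_ne hij with h | h
    · exact (hfr i j h).2
    · rw [← inner_conj_symm, (hfr j i h).2, map_zero]
  refine ⟨ε, hε, fun i => ((‖S (f i)‖ : ℂ))⁻¹ • S (f i),
    fun i => ((ε * ‖S (f i)‖⁻¹ : ℝ) : ℂ) • f i, ?_, ?_, ?_⟩
  · rw [orthonormal_iff_ite]
    intro i j
    rw [inner_smul_left, inner_smul_right]
    by_cases hij : i = j
    · subst hij
      rw [inner_self_eq_norm_sq_to_K]
      simp only [if_pos rfl, ↓reduceIte, map_inv₀, Complex.conj_ofReal]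
      have hne : (‖S (f i)‖ : ℂ) ≠ 0 := by
        exact_mod_cast (hpos i).ne'
      field_simp
      rfl
    · rw [horth i j hij, if_neg hij]; ring
  · intro i
    rw [norm_smul]
    have h1 : ε * ‖S (f i)‖⁻¹ ≤ 1 := by
      rw [← div_eq_mul_inv, div_le_one (hpos i)]
      exact (hfP i).2.le
    calc ‖((ε * ‖S (f i)‖⁻¹ : ℝ) : ℂ)‖ * ‖f i‖ ≤ ‖((ε * ‖S (f i)‖⁻¹ : ℝ) : ℂ)‖ * 1 := by
          exact mul_le_mul_of_nonneg_left (hfP i).1 (norm_nonneg _)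
      _ ≤ 1 := by
          rw [mul_one, Complex.norm_real, Real.norm_eq_abs, abs_of_nonneg (by positivity)]
          exact h1
  · intro i
    rw [map_smul, smul_smul]
    congr 1
    push_cast
    ring


/-- A bounded operator `S` on a complex Hilbert space `H` is
non-compact iff there are `c > 0`, an orthonormal sequence `(w i)` and a sequence
`(u i)` in the closed unit ball with `S (u i) = c • w i` for all `i`. -/
theorem noncompact_iff_isometric_ball {H : Type*} [NormedAddCommGroup H]
    [InnerProductSpace ℂ H] [CompleteSpace H] (S : H →L[ℂ] H) :
    ¬ IsCompactOperator S ↔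
      ∃ c : ℝ, 0 < c ∧ ∃ w u : ℕ → H, Orthonormal ℂ w ∧
        (∀ i, ‖u i‖ ≤ 1) ∧ ∀ i, S (u i) = (c : ℂ) • w i := by
  constructor
  · intro hS
    by_contra hdata
    apply hS
    have hgoal : IsCompactOperator ⇑(S : H →ₗ[ℂ] H) := by
      rw [isCompactOperator_iff_isCompact_closure_image_closedBall (S : H →ₗ[ℂ] H) zero_lt_one]
      apply TotallyBounded.isCompact_of_isClosed ?_ isClosed_closure
      apply TotallyBounded.closure
      refine Metric.totallyBounded_iff.mpr fun ε hε => ?_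
      have hnot : ¬ (∀ F : Submodule ℂ H, FiniteDimensional ℂ F →
          ∃ x ∈ Fᗮ, ‖x‖ ≤ 1 ∧ ε / 2 < ‖S x‖) := fun h =>
        hdata (stepX S (ε / 2) (by positivity) h)
      push_neg at hnot
      obtain ⟨F, hFfin, hFsm⟩ := hnot
      haveI := hFfin
      haveI : ProperSpace F := FiniteDimensional.proper ℂ F
      have hcpt : IsCompact ((fun z : F => S (z : H)) '' Metric.closedBall 0 1) :=
        (isCompact_closedBall (0 : F) 1).image (S.continuous.comp continuous_subtype_val)
      obtain ⟨t, htf, htsub⟩ :=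
        Metric.totallyBounded_iff.mp hcpt.totallyBounded (ε / 2) (by positivity)
      refine ⟨t, htf, ?_⟩
      rintro - ⟨x, hx, rfl⟩
      rw [Metric.mem_closedBall, dist_zero_right] at hx
      set p : H := (F.orthogonalProjectionOnto x : H) with hp
      have hpF : p ∈ F := (F.orthogonalProjectionOnto x).2
      have hqF : x - p ∈ Fᗮ := F.sub_starProjection_mem_orthogonal x
      have hsq : ‖x‖ ^ 2 = ‖p‖ ^ 2 + ‖x - p‖ ^ 2 := by
        have hinner : (inner ℂ p (x - p) : ℂ) = 0 :=
          (Submodule.mem_orthogonal F (x - p)).mp hqF p hpF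
        have := @norm_add_sq ℂ H _ _ _ p (x - p)
        rw [hinner] at this
        simpa using this
      have hpn : ‖p‖ ≤ 1 := by
        nlinarith [norm_nonneg p, norm_nonneg (x - p), norm_nonneg x]
      have hqn : ‖x - p‖ ≤ 1 := by
        nlinarith [norm_nonneg p, norm_nonneg (x - p), norm_nonneg x]
      have hSq : ‖S (x - p)‖ ≤ ε / 2 := hFsm _ hqF hqn
      have hSp : S p ∈ (fun z : F => S (z : H)) '' Metric.closedBall 0 1 := by
        refine ⟨⟨p, hpF⟩, ?_, rfl⟩
        rw [Metric.mem_closedBall, dist_zero_right]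
        exact hpn
      obtain ⟨y, hyt, hySp⟩ := Set.mem_iUnion₂.mp (htsub hSp)
      refine Set.mem_iUnion₂.mpr ⟨y, hyt, ?_⟩
      rw [Metric.mem_ball] at hySp ⊢
      have : dist (S x) (S p) ≤ ε / 2 := by
        rw [dist_eq_norm, ← map_sub]
        exact hSq
      calc dist (S x) y ≤ dist (S x) (S p) + dist (S p) y := dist_triangle _ _ _
        _ < ε / 2 + ε / 2 := by
            exact add_lt_add_of_le_of_lt this hySp
        _ = ε := by ring
    exact hgoal
  · rintro ⟨c, hc, w, u, hw, hu, hSu⟩ hcomp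
    have hK : IsCompact (closure ((S : H →ₗ[ℂ] H) '' Metric.closedBall 0 1)) := by
      rw [← isCompactOperator_iff_isCompact_closure_image_closedBall (S : H →ₗ[ℂ] H) zero_lt_one]
      exact hcomp
    have hmem : ∀ i, S (u i) ∈ closure ((S : H →ₗ[ℂ] H) '' Metric.closedBall 0 1) := by
      intro i
      exact subset_closure ⟨u i, Metric.mem_closedBall.mpr (by simpa using hu i), rfl⟩
    obtain ⟨a, -, φ, hφ, hconv⟩ := hK.tendsto_subseq hmem
    have hcau := hconv.cauchySeq
    rw [Metric.cauchySeq_iff] at hcau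
    obtain ⟨N, hN⟩ := hcau c hc
    have h1 := hN (N + 1) (by omega) N le_rfl
    simp only [Function.comp_apply] at h1
    have hne : φ (N + 1) ≠ φ N := (hφ (Nat.lt_succ_self N)).ne'
    have hdist : dist (S (u (φ (N + 1)))) (S (u (φ N))) ^ 2 = 2 * c ^ 2 := by
      rw [dist_eq_norm, hSu, hSu, ← smul_sub]
      rw [norm_smul]
      have h2 : ‖w (φ (N + 1)) - w (φ N)‖ ^ 2 = 2 := by
        rw [@norm_sub_sq ℂ]
        rw [hw.2 hne, hw.1, hw.1]
        simp
        norm_num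
      have : ‖(c : ℂ)‖ = c := by
        simp [Complex.norm_real, abs_of_pos hc]
      rw [this, mul_pow, h2]
      ring
    have hd0 : (0:ℝ) ≤ dist (S (u (φ (N + 1)))) (S (u (φ N))) := dist_nonneg
    nlinarith [h1, hdist, hd0, hc]
end

section
/- Let π : A → B(H) be a representation of a C*-algebra and v ∈ H, E ⊆ H. Then there exists a countable subset E₀ ⊆ E such that P_{H_{E₀}}(v) = P_{H_E}(v) (local character of the independence relation). -/
variable {A : Type*} [NormedRing A] [StarRing A] [CStarRing A] [CompleteSpace A]
  [NormedAlgebra ℂ A] [StarModule ℂ A]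
variable {H : Type*} [NormedAddCommGroup H] [InnerProductSpace ℂ H] [CompleteSpace H]

/-- The closed `A`-invariant subspace `H_E` of `H` generated by a set `E`. -/
noncomputable def genSubspace (π : A →⋆ₐ[ℂ] (H →L[ℂ] H)) (E : Set H) : Submodule ℂ H :=
  (Submodule.span ℂ {x : H | ∃ a : A, ∃ v ∈ E, π a v = x}).topologicalClosure

noncomputable instance genSubspace.completeSpace (π : A →⋆ₐ[ℂ] (H →L[ℂ] H)) (E : Set H) :
    CompleteSpace (genSubspace π E) := by
  unfold genSubspace; infer_instance

/-- **local character.** For every `v` and every `E ⊆ H` there is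
a countable `E₀ ⊆ E` with `P_{H_{E₀}} v = P_{H_E} v`. -/
theorem independence_local_character
    (π : A →⋆ₐ[ℂ] (H →L[ℂ] H)) (E : Set H) (v : H) :
    ∃ E₀ : Set H, E₀ ⊆ E ∧ E₀.Countable ∧
      (Submodule.orthogonalProjection (genSubspace π E₀) v : H) =
        (Submodule.orthogonalProjection (genSubspace π E) v : H) := by
  classical
  set S : Set H := {x : H | ∃ a : A, ∃ w ∈ E, π a w = x} with hS
  set p : H := (Submodule.orthogonalProjection (genSubspace π E) v : H) with hp
  have hpK : p ∈ genSubspace π E := (Submodule.orthogonalProjection (genSubspace π E) v).2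
  have hp_cl : p ∈ closure (Submodule.span ℂ S : Set H) := hpK
  rw [mem_closure_iff_seq_limit] at hp_cl
  obtain ⟨u, hu_mem, hu_lim⟩ := hp_cl
  have key : ∀ n : ℕ, ∃ F : Set H, F ⊆ E ∧ F.Countable ∧
      u n ∈ Submodule.span ℂ {x : H | ∃ a : A, ∃ w ∈ F, π a w = x} := by
    intro n
    obtain ⟨c, hc_supp, hc_sum⟩ := Submodule.mem_span_set.mp (hu_mem n)
    choose a w hw using fun x (hx : x ∈ S) => hx
    refine ⟨Set.range (fun x : c.support => w x (hc_supp x.2)), ?_, ?_, ?_⟩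
    · rintro y ⟨x, rfl⟩
      exact (hw _ _).1
    · exact (Set.finite_range _).countable
    · rw [← hc_sum]
      apply Submodule.sum_mem
      intro x hx
      refine Submodule.smul_mem _ _ (Submodule.subset_span ?_)
      exact ⟨a x (hc_supp hx), w x (hc_supp hx), ⟨⟨x, hx⟩, rfl⟩, (hw _ _).2⟩
  choose F hFE hFc hFu using key
  refine ⟨⋃ n, F n, Set.iUnion_subset hFE, Set.countable_iUnion hFc, ?_⟩
  have hmono : genSubspace π (⋃ n, F n) ≤ genSubspace π E := by
    apply Submodule.topologicalClosure_mono
    apply Submodule.span_mono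
    rintro x ⟨aa, ww, hwF, hx⟩
    obtain ⟨_, ⟨n, rfl⟩, hn⟩ := hwF
    exact ⟨aa, ww, hFE n hn, hx⟩
  have hpK0 : p ∈ genSubspace π (⋃ n, F n) := by
    have : ∀ n, u n ∈ (genSubspace π (⋃ n, F n) : Set H) := by
      intro n
      apply Submodule.le_topologicalClosure
      refine Submodule.span_mono ?_ (hFu n)
      rintro x ⟨aa, ww, hwF, hx⟩
      exact ⟨aa, ww, Set.mem_iUnion.mpr ⟨n, hwF⟩, hx⟩
    have hc : IsClosed (genSubspace π (⋃ n, F n) : Set H) := by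
      unfold genSubspace; exact Submodule.isClosed_topologicalClosure _
    exact hc.mem_of_tendsto hu_lim (Filter.Eventually.of_forall this)
  rw [← Submodule.starProjection_apply]
  apply Submodule.eq_starProjection_of_mem_of_inner_eq_zero hpK0
  intro w hw
  exact Submodule.starProjection_inner_eq_zero v w (hmono hw)
end
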